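/- arXiv:math/0006131 — 2 statements merged into one kernel-verified Lean document; each statement's English description precedes it below -/
import Mathlib

section
/- Let L be a finite, rank-connected, dismantlable lattice with r(⊤) ≥ 2 in which every rank set R_i with 0 < i < r(⊤) contains at least two elements. Then L contains a doubly irreducible element that has a corner. -/
/-! Common definitions: finite lattices, rank functions, rank-connectivity,
interval-connectivity, dismantlability, lexicographic shellability. -/

section Defs

variable (L : Type*) [Lattice L]

/-- `r` is a rank function for the bounded lattice `L`: `r ⊥ = 0` and `r`
increases by exactly one along covering relations.  For a finite lattice this
is equivalent to all maximal chains from `⊥` to `⊤` having the same length,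
and then `r x` is the length of any maximal chain from `⊥` to `x`. -/
def IsRankFunction [OrderBot L] (r : L → ℕ) : Prop :=
  r ⊥ = 0 ∧ ∀ a b : L, a ⋖ b → r b = r a + 1

/-- The Hasse diagram of `L` restricted to a set `S`: the (simple) graph on `S`
whose edges are the covering relations of `L` between elements of `S`. -/
def hasseGraph (S : Set L) : SimpleGraph S where
  Adj a b := ((a : L) ⋖ (b : L)) ∨ ((b : L) ⋖ (a : L))
  symm := ⟨fun a b h => Or.symm h⟩
  loopless := ⟨fun a h => by rcases h with h | h <;> exact h.ne rfl⟩

/-- `L` is rank-connected: it is ranked, and for each `i < r ⊤` the bipartite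
graph on the elements of ranks `i` and `i + 1`, with the covering relations as
edges, is connected. -/
def RankConnected [BoundedOrder L] : Prop :=
  ∃ r : L → ℕ, IsRankFunction L r ∧
    ∀ i : ℕ, i < r (⊤ : L) →
      (hasseGraph L {x : L | r x = i ∨ r x = i + 1}).Connected

/-- `L` is interval-connected: it is ranked, and for every pair `x ≤ y` with
`r y ≥ r x + 2` the Hasse diagram of the open interval `(x, y)` (edges being
the covering relations of `L` between its elements) is connected. -/
def IntervalConnected [BoundedOrder L] : Prop :=
  ∃ r : L → ℕ, IsRankFunction L r ∧
    ∀ x y : L, x ≤ y → r x + 2 ≤ r y →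
      (hasseGraph L {z : L | x < z ∧ z < y}).Connected

/-- A finite lattice `L` with `n` elements is dismantlable if there is a chain
`L₁ ⊆ L₂ ⊆ ⋯ ⊆ Lₙ = L` of sublattices of `L` with `|Lᵢ| = i`. -/
def Dismantlable : Prop :=
  ∃ C : ℕ → Set L,
    (∀ i : ℕ, 1 ≤ i → i ≤ Nat.card L → IsSublattice (C i) ∧ (C i).ncard = i) ∧
    (∀ i j : ℕ, i ≤ j → C i ⊆ C j) ∧
    C (Nat.card L) = Set.univ

variable {L}

/-- `l` is an unrefinable (i.e. saturated) chain which is rising with respect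
to the edge labelling `f`: consecutive entries are covering pairs and the
labels of consecutive covering pairs weakly increase. -/
def RisingChain (f : L → L → ℝ) (l : List L) : Prop :=
  l.Chain' (· ⋖ ·) ∧
    (l.zip l.tail).Chain' (fun p q => f p.1 p.2 ≤ f q.1 q.2)

/-- `f` (viewed as a labelling of the covering relations of `L` by reals) is an
L-labelling witnessing lexicographic shellability of the interval `[a, b]`:
(1) every subinterval `[x, y]` has a unique rising unrefinable chain from `x`
to `y`, and (2) the rising chain lexicographically precedes all others: if
`z ∈ [x, y]` covers `x` and `z` is not the second element `x₁` of the rising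
chain, then `f x x₁ < f x z`. -/
def IsLexShellingOn (a b : L) (f : L → L → ℝ) : Prop :=
  (∀ x y : L, a ≤ x → x ≤ y → y ≤ b →
      ∃! l : List L,
        l.head? = some x ∧ l.getLast? = some y ∧ RisingChain f l) ∧
  (∀ x y : L, a ≤ x → x ≤ y → y ≤ b →
      ∀ l : List L, l.head? = some x → l.getLast? = some y → RisingChain f l →
        ∀ x₁ : L, l[1]? = some x₁ →
          ∀ z : L, x ⋖ z → z ≤ y → z ≠ x₁ → f x x₁ < f x z)

variable (L)

/-- `L` is lexicographically shellable. -/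
def LexShellable [BoundedOrder L] : Prop :=
  ∃ f : L → L → ℝ, IsLexShellingOn (⊥ : L) (⊤ : L) f

variable {L}

/-- `x` is join-irreducible: it covers exactly one element. -/
def JoinIrred (x : L) : Prop := ∃! z : L, z ⋖ x

/-- `x` is meet-irreducible: it is covered by exactly one element. -/
def MeetIrred (x : L) : Prop := ∃! y : L, x ⋖ y

/-- `x` is doubly irreducible: both join- and meet-irreducible. -/
def DoublyIrred (x : L) : Prop := JoinIrred x ∧ MeetIrred x

/-- `w` is a corner of `x`: `x` is doubly irreducible and there are `z`, `y`
such that `x` and `w` both cover `z` and are both covered by `y`. -/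
def IsCornerOf (w x : L) : Prop :=
  DoublyIrred x ∧ w ≠ x ∧ ∃ z y : L, z ⋖ x ∧ z ⋖ w ∧ x ⋖ y ∧ w ⋖ y

end Defs

/-!
Dismantlability provides a doubly irreducible `x` strictly between `⊥` and `⊤`: the last element
of a dismantling (two atoms and two coatoms keep it away from `⊥` and `⊤`). Let `z ⋖ x ⋖ y` and
suppose `x` has no corner, so that `[z, y] = {z, x, y}`. Connectivity of the ranks `r x`, `r x + 1`
gives `y` a second lower cover, and then a shortest path from `z`, in the Hasse diagram of the ranks
`r z`, `r x`, to an element below `y` other than `x` and `z` is chordless; closed up by `y` it is a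
crown. A dismantlable lattice has no crown: going down a dismantling, a crown can be moved into the
next sublattice by replacing a removed minimal element `a t` by `b (t - 1) ⊓ b t` (dually for a
maximal one), until only one point is left.
-/

section Rank

variable {L : Type*} [PartialOrder L] {r : L → ℕ}

theorem strictMono_of_covBy_succ [Finite L] (hr : ∀ a b : L, a ⋖ b → r b = r a + 1) :
    StrictMono r := by
  classical
  let _ : Fintype L := .ofFinite L
  let _ : LocallyFiniteOrder L := Fintype.toLocallyFiniteOrder
  exact (strictMono_iff_forall_covBy r).2 fun a b h => by rw [hr a b h]; omega

theorem eq_of_le_of_rank_eq (hmono : StrictMono r) {a b : L} (h : a ≤ b) (hab : r a = r b) :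
    a = b :=
  h.eq_or_lt.resolve_right fun hlt => (hmono hlt).ne hab

theorem covBy_of_lt_of_rank_eq_succ (hmono : StrictMono r) {a b : L} (h : a < b)
    (hab : r b = r a + 1) : a ⋖ b :=
  ⟨h, fun c hac hcb => by have := hmono hac; have := hmono hcb; omega⟩

theorem isAtom_of_rank_eq_one [OrderBot L] (hmono : StrictMono r) (hbot : r ⊥ = 0) {a : L}
    (ha : r a = 1) : IsAtom a :=
  bot_covBy_iff.1 <| covBy_of_lt_of_rank_eq_succ hmono
    (bot_lt_iff_ne_bot.2 fun h => by rw [h] at ha; omega) (by omega)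

theorem isCoatom_of_rank_succ_eq [OrderTop L] (hmono : StrictMono r) {b : L}
    (hb : r b + 1 = r ⊤) : IsCoatom b :=
  covBy_top_iff.1 <| covBy_of_lt_of_rank_eq_succ hmono
    (lt_top_iff_ne_top.2 fun h => by rw [h] at hb; omega) hb.symm

end Rank

theorem SimpleGraph.Connected.mem_of_adj_closed {V : Type*} {G : SimpleGraph V}
    (hG : G.Connected) {S : Set V} (hS : ∀ u v, G.Adj u v → u ∈ S → v ∈ S) {u : V}
    (hu : u ∈ S) (v : V) : v ∈ S := by
  obtain ⟨W⟩ := hG.preconnected u v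
  induction W with
  | nil => exact hu
  | cons h _ ih => exact ih (hS _ _ h hu)

theorem SimpleGraph.Connected.exists_shortest_walk_to_set {V : Type*} {G : SimpleGraph V}
    (hG : G.Connected) (u : V) {D : Set V} (hD : D.Nonempty) :
    ∃ (m : ℕ) (p : ℕ → V), p 0 = u ∧ p m ∈ D ∧ (∀ k < m, G.Adj (p k) (p (k + 1))) ∧
      (∀ k ≤ m, G.dist u (p k) = k) ∧ ∀ d ∈ D, m ≤ G.dist u d := by
  obtain ⟨W, hW⟩ := hG.exists_walk_length_eq_dist u (Function.argminOn (G.dist u) D hD)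
  refine ⟨W.length, W.getVert, W.getVert_zero, ?_, fun k hk => W.adj_getVert_succ hk,
    fun k hk => ?_, fun d' hd' => hW ▸ Function.argminOn_le _ _ hd'⟩
  · simpa only [W.getVert_length] using Function.argminOn_mem (G.dist u) D hD
  · rw [← SimpleGraph.length_eq_dist_of_subwalk hW (W.isSubwalk_take k), W.take_length]
    omega

theorem ZMod.two_ne_zero_of_three_le {q : ℕ} (hq : 3 ≤ q) : (2 : ZMod q) ≠ 0 := fun h =>
  absurd (Nat.le_of_dvd two_pos ((ZMod.natCast_eq_zero_iff 2 q).1 (by exact_mod_cast h))) (by omega)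

theorem ZMod.add_one_eq_iff_val {q : ℕ} [NeZero q] {s t : ZMod q} :
    t + 1 = s ↔ s.val = t.val + 1 ∨ s.val = 0 ∧ t.val + 1 = q := by
  have hs := s.val_lt
  have ht := t.val_lt
  rw [← (ZMod.val_injective q).eq_iff, ZMod.val_add, ZMod.val_one_eq_one_mod]
  rcases Nat.lt_or_ge 1 q with hq | hq
  · rw [Nat.mod_eq_of_lt hq]
    rcases Nat.lt_or_ge (t.val + 1) q with h | h
    · rw [Nat.mod_eq_of_lt h]; omega
    · rw [show t.val + 1 = q by omega, Nat.mod_self]; omega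
  · obtain rfl : q = 1 := by omega
    omega

section Crown

variable {L : Type*} {q : ℕ}

/-- A crown: `b t` lies above exactly `a t` and `a (t + 1)`, with no other comparabilities. -/
structure IsCrown [PartialOrder L] (a b : ZMod q → L) : Prop where
  le_iff : ∀ s t, a s ≤ b t ↔ t = s ∨ t + 1 = s
  eq_of_lower_le : ∀ s t, a s ≤ a t → s = t
  eq_of_upper_le : ∀ s t, b s ≤ b t → s = t
  not_upper_le_lower : ∀ s t, ¬ b s ≤ a t

variable [Lattice L] {a b : ZMod q → L}

theorem IsCrown.update_inf (h : IsCrown a b) (h2 : (2 : ZMod q) ≠ 0) (t₀ : ZMod q) :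
    IsCrown (Function.update a t₀ (b (t₀ - 1) ⊓ b t₀)) b := by
  have : Nontrivial (ZMod q) := nontrivial_of_ne 2 0 h2
  have ha₀ : a t₀ ≤ b (t₀ - 1) ⊓ b t₀ :=
    le_inf ((h.le_iff _ _).2 (Or.inr (by ring))) ((h.le_iff _ _).2 (Or.inl rfl))
  have hle : ∀ t, b (t₀ - 1) ⊓ b t₀ ≤ b t ↔ t = t₀ ∨ t + 1 = t₀ := by
    refine fun t => ⟨fun ht => (h.le_iff t₀ t).1 (ha₀.trans ht), ?_⟩
    rintro (rfl | rfl)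
    · exact inf_le_right
    · simp
  have hge : ∀ s, a s ≤ b (t₀ - 1) ⊓ b t₀ → s = t₀ := by
    intro s hs
    rcases (h.le_iff s (t₀ - 1)).1 (hs.trans inf_le_left) with e | e
    · rcases (h.le_iff s t₀).1 (hs.trans inf_le_right) with e' | e'
      · exact e'.symm
      · exact (h2 (by linear_combination e' - e)).elim
    · linear_combination -e
  refine ⟨fun s t => ?_, fun s t hst => ?_, h.eq_of_upper_le, fun s t hst => ?_⟩
  · rcases eq_or_ne s t₀ with rfl | hs
    · simp [hle t]
    · simpa [hs] using h.le_iff s t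
  · by_cases hs : s = t₀ <;> by_cases ht : t = t₀
    · rw [hs, ht]
    · subst hs
      rw [Function.update_self, Function.update_of_ne ht] at hst
      exact h.eq_of_lower_le _ _ (ha₀.trans hst)
    · subst ht
      rw [Function.update_self, Function.update_of_ne hs] at hst
      exact hge s hst
    · rw [Function.update_of_ne hs, Function.update_of_ne ht] at hst
      exact h.eq_of_lower_le s t hst
  · by_cases ht : t = t₀
    · subst ht
      rw [Function.update_self] at hst
      have e := h.eq_of_upper_le _ _ (hst.trans inf_le_left)
      have e' := h.eq_of_upper_le _ _ (hst.trans inf_le_right)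
      exact one_ne_zero (by linear_combination e - e')
    · rw [Function.update_of_ne ht] at hst
      exact h.not_upper_le_lower s t hst

theorem IsCrown.update_sup (h : IsCrown a b) (h2 : (2 : ZMod q) ≠ 0) (t₀ : ZMod q) :
    IsCrown a (Function.update b t₀ (a t₀ ⊔ a (t₀ + 1))) := by
  have : Nontrivial (ZMod q) := nontrivial_of_ne 2 0 h2
  have hb₀ : a t₀ ⊔ a (t₀ + 1) ≤ b t₀ :=
    sup_le ((h.le_iff _ _).2 (Or.inl rfl)) ((h.le_iff _ _).2 (Or.inr rfl))
  have hle : ∀ s, a s ≤ a t₀ ⊔ a (t₀ + 1) ↔ t₀ = s ∨ t₀ + 1 = s := by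
    refine fun s => ⟨fun hs => (h.le_iff s t₀).1 (hs.trans hb₀), ?_⟩
    rintro (rfl | rfl)
    · exact le_sup_left
    · exact le_sup_right
  have hge : ∀ t, a t₀ ⊔ a (t₀ + 1) ≤ b t → t = t₀ := by
    intro t ht
    rcases (h.le_iff t₀ t).1 (le_sup_left.trans ht) with e | e
    · exact e
    rcases (h.le_iff (t₀ + 1) t).1 (le_sup_right.trans ht) with e' | e'
    · exact (h2 (by linear_combination e - e')).elim
    · linear_combination e'
  refine ⟨fun s t => ?_, h.eq_of_lower_le, fun s t hst => ?_, fun s t hst => ?_⟩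
  · rcases eq_or_ne t t₀ with rfl | ht
    · simpa using hle s
    · simpa [ht] using h.le_iff s t
  · by_cases hs : s = t₀ <;> by_cases ht : t = t₀
    · rw [hs, ht]
    · subst hs
      rw [Function.update_self, Function.update_of_ne ht] at hst
      exact (hge t hst).symm
    · subst ht
      rw [Function.update_self, Function.update_of_ne hs] at hst
      exact h.eq_of_upper_le _ _ (hst.trans hb₀)
    · rw [Function.update_of_ne hs, Function.update_of_ne ht] at hst
      exact h.eq_of_upper_le s t hst
  · by_cases hs : s = t₀
    · subst hs
      rw [Function.update_self] at hst
      have e := h.eq_of_lower_le _ _ (le_sup_left.trans hst)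
      have e' := h.eq_of_lower_le _ _ (le_sup_right.trans hst)
      exact one_ne_zero (by linear_combination e' - e)
    · rw [Function.update_of_ne hs] at hst
      exact h.not_upper_le_lower s t hst

theorem IsCrown.exists_range_subset (h : IsCrown a b) (h2 : (2 : ZMod q) ≠ 0) {S : Set L}
    (hS : IsSublattice S) {x₀ : L} (ha : Set.range a ⊆ insert x₀ S)
    (hb : Set.range b ⊆ insert x₀ S) :
    ∃ a' b' : ZMod q → L, IsCrown a' b' ∧ Set.range a' ⊆ S ∧ Set.range b' ⊆ S := by
  have ha' : ∀ t, a t ≠ x₀ → a t ∈ S := fun t ht =>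
    (Set.mem_insert_iff.1 (ha ⟨t, rfl⟩)).resolve_left ht
  have hb' : ∀ t, b t ≠ x₀ → b t ∈ S := fun t ht =>
    (Set.mem_insert_iff.1 (hb ⟨t, rfl⟩)).resolve_left ht
  by_cases hA : ∃ t₀, a t₀ = x₀
  · obtain ⟨t₀, rfl⟩ := hA
    have hbS : ∀ t, b t ∈ S := fun t => hb' t fun e => h.not_upper_le_lower t t₀ e.le
    refine ⟨_, b, h.update_inf h2 t₀, ?_, Set.range_subset_iff.2 hbS⟩
    rintro _ ⟨t, rfl⟩
    rcases eq_or_ne t t₀ with rfl | ht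
    · simpa using hS.infClosed (hbS _) (hbS _)
    · rw [Function.update_of_ne ht]
      exact ha' t fun e => ht (h.eq_of_lower_le _ _ e.le)
  by_cases hB : ∃ t₀, b t₀ = x₀
  · obtain ⟨t₀, rfl⟩ := hB
    have haS : ∀ t, a t ∈ S := fun t => ha' t fun e => hA ⟨t, e⟩
    refine ⟨a, _, h.update_sup h2 t₀, Set.range_subset_iff.2 haS, ?_⟩
    rintro _ ⟨t, rfl⟩
    rcases eq_or_ne t t₀ with rfl | ht
    · simpa using hS.supClosed (haS _) (haS _)
    · rw [Function.update_of_ne ht]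
      exact hb' t fun e => ht (h.eq_of_upper_le _ _ e.le)
  simp only [not_exists] at hA hB
  exact ⟨a, b, h, Set.range_subset_iff.2 fun t => ha' t (hA t),
    Set.range_subset_iff.2 fun t => hb' t (hB t)⟩

theorem Dismantlable.not_isCrown [Finite L] (hd : Dismantlable L) (h2 : (2 : ZMod q) ≠ 0) :
    ¬ IsCrown a b := by
  intro h
  have : Nontrivial (ZMod q) := nontrivial_of_ne 2 0 h2
  obtain ⟨C, hC, hmono, huniv⟩ := hd
  suffices key : ∀ k, 1 ≤ k → k ≤ Nat.card L →
      ¬ ∃ a b : ZMod q → L, IsCrown a b ∧ Set.range a ⊆ C k ∧ Set.range b ⊆ C k by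
    have : Nonempty L := ⟨a 0⟩
    exact key _ Nat.card_pos le_rfl ⟨a, b, h, by simp [huniv], by simp [huniv]⟩
  intro k hk hkn
  induction k with
  | zero => omega
  | succ k ih =>
    rintro ⟨a, b, h, ha, hb⟩
    rcases Nat.eq_zero_or_pos k with rfl | hk
    · obtain ⟨e, he⟩ := Set.ncard_eq_one.1 (hC 1 le_rfl hkn).2
      have h0 := ha ⟨0, rfl⟩
      have h1 := ha ⟨1, rfl⟩
      rw [he, Set.mem_singleton_iff] at h0 h1
      exact one_ne_zero (h.eq_of_lower_le 1 0 (h1.trans h0.symm).le)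
    · obtain ⟨x₀, -, hx₀⟩ := (Set.exists_eq_insert_iff_ncard (C k).toFinite).2
        ⟨hmono k (k + 1) k.le_succ, by rw [(hC k hk (by omega)).2, (hC (k + 1) (by omega) hkn).2]⟩
      rw [← hx₀] at ha hb
      exact ih hk (by omega) (h.exists_range_subset h2 (hC k hk (by omega)).1 ha hb)

end Crown

theorem isCrown_of_cycle {L : Type*} [PartialOrder L] {q : ℕ} [NeZero q] (c : ℕ → L)
    (hc : ∀ k l, k < 2 * q → l < 2 * q →
      (c k ≤ c l ↔ k = l ∨ k % 2 = 0 ∧ (l = k + 1 ∨ k = l + 1 ∨ k = 0 ∧ l = 2 * q - 1))) :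
    IsCrown (fun t : ZMod q => c (2 * t.val)) (fun t => c (2 * t.val + 1)) := by
  have hval := ZMod.val_lt (n := q)
  have hinj : ∀ s t : ZMod q, s = t ↔ s.val = t.val := fun s t => (ZMod.val_injective q).eq_iff.symm
  refine ⟨fun s t => ?_, fun s t h => ?_, fun s t h => ?_, fun s t h => ?_⟩ <;>
    have := hval s <;> have := hval t
  · rw [hc _ _ (by omega) (by omega), ZMod.add_one_eq_iff_val, hinj]
    omega
  · rw [hc _ _ (by omega) (by omega)] at h
    rw [hinj]
    omega
  · rw [hc _ _ (by omega) (by omega)] at h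
    rw [hinj]
    omega
  · rw [hc _ _ (by omega) (by omega)] at h
    omega

section Irreducible

variable {L : Type*} [Lattice L] {x : L}

theorem joinIrred_of_supClosed_compl [Finite L] [OrderBot L] (hx : SupClosed ({x}ᶜ : Set L))
    (hbot : x ≠ ⊥) : JoinIrred x := by
  obtain ⟨z, -, hz⟩ := exists_le_covBy_of_lt (bot_lt_iff_ne_bot.2 hbot)
  exact ⟨z, hz, fun c hc => by_contra fun hcz => hx hc.ne hz.ne (hc.wcovBy.sup_eq hz.wcovBy hcz)⟩

theorem meetIrred_of_infClosed_compl [Finite L] [OrderTop L] (hx : InfClosed ({x}ᶜ : Set L))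
    (htop : x ≠ ⊤) : MeetIrred x := by
  obtain ⟨y, hy, -⟩ := exists_covBy_le_of_lt (lt_top_iff_ne_top.2 htop)
  exact ⟨y, hy, fun c hc => by_contra fun hcy =>
    hx hc.ne' hy.ne' (hc.wcovBy.inf_eq hy.wcovBy hcy)⟩

theorem ne_bot_of_infClosed_compl [OrderBot L] (hx : InfClosed ({x}ᶜ : Set L)) {a₁ a₂ : L}
    (h₁ : IsAtom a₁) (h₂ : IsAtom a₂) (hne : a₁ ≠ a₂) : x ≠ ⊥ := by
  rintro rfl
  exact hx h₁.ne_bot h₂.ne_bot (h₁.disjoint_of_ne h₂ hne).eq_bot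

theorem ne_top_of_supClosed_compl [OrderTop L] (hx : SupClosed ({x}ᶜ : Set L)) {b₁ b₂ : L}
    (h₁ : IsCoatom b₁) (h₂ : IsCoatom b₂) (hne : b₁ ≠ b₂) : x ≠ ⊤ := by
  rintro rfl
  exact hx h₁.ne_top h₂.ne_top (h₁.sup_eq_top_of_ne h₂ hne)

theorem Dismantlable.exists_isSublattice_compl [Finite L] [Nontrivial L] (hd : Dismantlable L) :
    ∃ x : L, IsSublattice ({x}ᶜ : Set L) := by
  obtain ⟨C, hC, hmono, huniv⟩ := hd
  have hn : 1 < Nat.card L := Finite.one_lt_card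
  obtain ⟨x, hxC, hins⟩ := (Set.exists_eq_insert_iff_ncard (t := C (Nat.card L))
    (C (Nat.card L - 1)).toFinite).2
    ⟨hmono _ _ (by omega), by
      rw [(hC _ (by omega) (by omega)).2, (hC _ (by omega) le_rfl).2]; omega⟩
  refine ⟨x, ?_⟩
  convert (hC (Nat.card L - 1) (by omega) (by omega)).1
  ext v
  refine ⟨fun hv => ?_, fun hv (e : v = x) => hxC (e ▸ hv)⟩
  have := hins.trans huniv ▸ Set.mem_univ v
  exact (Set.mem_insert_iff.1 this).resolve_left hv

theorem Dismantlable.exists_doublyIrred [Finite L] [BoundedOrder L] (hd : Dismantlable L)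
    {a₁ a₂ b₁ b₂ : L} (ha₁ : IsAtom a₁) (ha₂ : IsAtom a₂) (ha : a₁ ≠ a₂)
    (hb₁ : IsCoatom b₁) (hb₂ : IsCoatom b₂) (hb : b₁ ≠ b₂) :
    ∃ x : L, DoublyIrred x ∧ x ≠ ⊥ ∧ x ≠ ⊤ := by
  have : Nontrivial L := ⟨⟨a₁, ⊥, ha₁.ne_bot⟩⟩
  obtain ⟨x, hx⟩ := hd.exists_isSublattice_compl
  have hbot := ne_bot_of_infClosed_compl hx.infClosed ha₁ ha₂ ha
  have htop := ne_top_of_supClosed_compl hx.supClosed hb₁ hb₂ hb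
  exact ⟨x, ⟨joinIrred_of_supClosed_compl hx.supClosed hbot,
    meetIrred_of_infClosed_compl hx.infClosed htop⟩, hbot, htop⟩

end Irreducible

section Layer

variable {L : Type*} [Lattice L] {r : L → ℕ} {j : ℕ}

theorem rank_add_rank_of_hasseGraph_adj (hr : ∀ a b : L, a ⋖ b → r b = r a + 1)
    {u v : {v : L | r v = j ∨ r v = j + 1}} (h : (hasseGraph L _).Adj u v) :
    r u + r v = 2 * j + 1 := by
  rcases u.2 with hu | hu <;> rcases v.2 with hv | hv <;> rcases h with h | h <;>
    have := hr _ _ h <;> omega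

theorem hasseGraph_adj_of_lt (hmono : StrictMono r) {u v : {v : L | r v = j ∨ r v = j + 1}}
    (h : (u : L) < v) : (hasseGraph L _).Adj u v :=
  Or.inl <| covBy_of_lt_of_rank_eq_succ hmono h <| by
    have := hmono h; rcases u.2 with hu | hu <;> rcases v.2 with hv | hv <;> omega

/-- In a connected layer, the component of a meet-irreducible `x` cannot be just `{x, y}`. -/
theorem exists_covBy_ne_of_meetIrred (hr : ∀ a b : L, a ⋖ b → r b = r a + 1) {i : ℕ}
    (hconn : (hasseGraph L {v : L | r v = i ∨ r v = i + 1}).Connected) {x x' y : L}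
    (hx : r x = i) (hx' : r x' = i) (hxx' : x' ≠ x) (hxy : x ⋖ y) (hy : ∀ c, x ⋖ c → c = y) :
    ∃ w, w ⋖ y ∧ w ≠ x := by
  by_contra! hw
  have hry := hr _ _ hxy
  have hclosed : ∀ u v : {v : L | r v = i ∨ r v = i + 1}, (hasseGraph L _).Adj u v →
      (u : L) ∈ ({x, y} : Set L) → (v : L) ∈ ({x, y} : Set L) := by
    rintro u v (huv | huv) (hu | hu) <;> rw [hu] at huv
    · exact Or.inr (hy _ huv)
    · have := hr _ _ huv; rcases v.2 with h | h <;> omega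
    · have := hr _ _ huv; rcases v.2 with h | h <;> omega
    · exact Or.inl (hw _ huv)
  rcases hconn.mem_of_adj_closed (S := {v | (v : L) ∈ ({x, y} : Set L)}) hclosed
    (u := ⟨x, Or.inl hx⟩) (Or.inl rfl) ⟨x', Or.inl hx'⟩ with h | h
  · exact hxx' h
  · change x' = y at h
    rw [h] at hx'
    omega

/-- `p 0, …, p m` is a shortest path in the Hasse diagram of the ranks `j` and `j + 1` from `z`
to an element below `y` other than `x` and `z`. -/
structure ShortestPathBelow (r : L → ℕ) (j : ℕ) (x y z : L) (m : ℕ) (p : ℕ → L) : Prop where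
  start : p 0 = z
  last_le : p m ≤ y
  last_ne_x : p m ≠ x
  last_ne_z : p m ≠ z
  rank_eq : ∀ k ≤ m, r (p k) = j + k % 2
  covBy_or_covBy : ∀ k < m, p k ⋖ p (k + 1) ∨ p (k + 1) ⋖ p k
  eq_or_succ_of_le : ∀ k ≤ m, ∀ l ≤ m, p k ≤ p l → k = l ∨ l = k + 1 ∨ k = l + 1
  eq_x_or_eq_z_of_le : ∀ k < m, p k ≤ y → p k = x ∨ p k = z

theorem exists_shortestPathBelow [Finite L] (hr : ∀ a b : L, a ⋖ b → r b = r a + 1)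
    (hconn : (hasseGraph L {v : L | r v = j ∨ r v = j + 1}).Connected) {x y z w : L}
    (hz : r z = j) (hx : r x = j + 1) (hxy : x ⋖ y) (hwy : w ⋖ y) (hwx : w ≠ x) :
    ∃ m p, ShortestPathBelow r j x y z m p := by
  have hw : r w = j + 1 := by have := hr _ _ hwy; have := hr _ _ hxy; omega
  let D : Set {v : L | r v = j ∨ r v = j + 1} := {v | (v : L) ≤ y ∧ (v : L) ≠ x ∧ (v : L) ≠ z}
  have hwD : ⟨w, Or.inr hw⟩ ∈ D := ⟨hwy.le, hwx, fun h : w = z => by rw [h] at hw; omega⟩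
  obtain ⟨m, p, hp0, hpm, hadj, hdist, hmin⟩ :=
    hconn.exists_shortest_walk_to_set ⟨z, Or.inl hz⟩ ⟨_, hwD⟩
  refine ⟨m, fun k => p k, congrArg Subtype.val hp0, hpm.1, hpm.2.1, hpm.2.2, ?_, hadj, ?_, ?_⟩
  · intro k hk
    induction k with
    | zero => simp [hp0, hz]
    | succ k ih =>
      have := rank_add_rank_of_hasseGraph_adj hr (hadj k (by omega))
      have := ih (by omega)
      omega
  · intro k hk l hl hle
    rcases eq_or_ne (p k) (p l) with h | h
    · exact Or.inl (by rw [← hdist k hk, ← hdist l hl, h])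
    · have hkl := (hasseGraph_adj_of_lt (strictMono_of_covBy_succ hr)
        (lt_of_le_of_ne hle (Subtype.val_injective.ne h))).diff_dist_adj (u := ⟨z, Or.inl hz⟩)
      rw [hdist k hk, hdist l hl] at hkl
      have : k ≠ l := by rintro rfl; exact h rfl
      omega
  · intro k hk hle
    by_contra! hne
    have := hmin (p k) ⟨hle, hne⟩
    rw [hdist k hk.le] at this
    omega

end Layer

namespace ShortestPathBelow

variable {L : Type*} [Lattice L] {r : L → ℕ} {j m : ℕ} {x y z : L} {p : ℕ → L}

theorem rank_start (P : ShortestPathBelow r j x y z m p) : r z = j := by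
  simpa [P.start] using P.rank_eq 0 (Nat.zero_le m)

theorem index_eq_of_eq (P : ShortestPathBelow r j x y z m p) {k l : ℕ} (hk : k ≤ m) (hl : l ≤ m)
    (h : p k = p l) : k = l := by
  have hrank := congrArg r h
  rw [P.rank_eq k hk, P.rank_eq l hl] at hrank
  rcases P.eq_or_succ_of_le k hk l hl h.le with e | e | e <;> omega

theorem covBy_succ (P : ShortestPathBelow r j x y z m p) (hr : ∀ a b : L, a ⋖ b → r b = r a + 1)
    {k : ℕ} (hk : k < m) (he : k % 2 = 0) : p k ⋖ p (k + 1) :=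
  (P.covBy_or_covBy k hk).resolve_right fun h => by
    have := hr _ _ h; have := P.rank_eq k hk.le; have := P.rank_eq (k + 1) hk; omega

theorem succ_covBy (P : ShortestPathBelow r j x y z m p) (hr : ∀ a b : L, a ⋖ b → r b = r a + 1)
    {k : ℕ} (hk : k < m) (ho : k % 2 = 1) : p (k + 1) ⋖ p k :=
  (P.covBy_or_covBy k hk).resolve_left fun h => by
    have := hr _ _ h; have := P.rank_eq k hk.le; have := P.rank_eq (k + 1) hk; omega

theorem ne_x (P : ShortestPathBelow r j x y z m p) (hr : ∀ a b : L, a ⋖ b → r b = r a + 1)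
    (hzx : z ⋖ x) (hz : ∀ c, c ⋖ x → c = z) (heven : m % 2 = 0) {k : ℕ} (hk : k ≤ m) :
    p k ≠ x := by
  intro hkx
  rcases hk.eq_or_lt with rfl | hk
  · exact P.last_ne_x hkx
  have hodd : k % 2 = 1 := by
    have := P.rank_eq k hk.le; have := hr _ _ hzx; have := P.rank_start; rw [hkx] at *; omega
  have := P.index_eq_of_eq (by omega) (Nat.zero_le m)
    ((hz _ (hkx ▸ P.succ_covBy hr hk hodd)).trans P.start.symm)
  omega

theorem even (P : ShortestPathBelow r j x y z m p) (hr : ∀ a b : L, a ⋖ b → r b = r a + 1)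
    (hzx : z ⋖ x) (hxy : x ⋖ y) (hmid : ∀ v, z < v → v < y → v = x) : m % 2 = 0 := by
  by_contra hodd
  have hcov := P.covBy_succ hr (k := m - 1) (by omega) (by omega)
  rw [Nat.sub_add_cancel (by omega)] at hcov
  have hrm := P.rank_eq m le_rfl
  have := hr _ _ hzx; have := hr _ _ hxy; have := P.rank_start
  rcases P.eq_x_or_eq_z_of_le (m - 1) (by omega) (hcov.le.trans P.last_le) with h | h
  · have := P.rank_eq (m - 1) (by omega); rw [h] at this; omega
  · refine P.last_ne_x (hmid _ (h ▸ hcov.lt) (P.last_le.lt_of_ne fun e => ?_))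
    rw [e] at hrm; omega

theorem ne_two [Finite L] (P : ShortestPathBelow r j x y z m p)
    (hr : ∀ a b : L, a ⋖ b → r b = r a + 1) (hzx : z ⋖ x) (hz : ∀ c, c ⋖ x → c = z) (hxy : x ⋖ y)
    (hmid : ∀ v, z < v → v < y → v = x) : m ≠ 2 := by
  rintro rfl
  have hmono := strictMono_of_covBy_succ hr
  have h01 : z ⋖ p 1 := P.start ▸ P.covBy_succ hr (k := 0) two_pos rfl
  have h21 : p 2 ⋖ p 1 := P.succ_covBy hr (k := 1) one_lt_two rfl
  have h2z : ¬ p 2 ≤ z := fun h => P.last_ne_z <|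
    eq_of_le_of_rank_eq hmono h (by simp [P.rank_eq 2 le_rfl, P.rank_start])
  have hp1 : z ⊔ p 2 = p 1 := (sup_le h01.le h21.le).eq_of_not_lt (h01.2 (left_lt_sup.2 h2z))
  have hp1y : p 1 < y := by
    refine (hp1 ▸ sup_le (hzx.le.trans hxy.le) P.last_le).lt_of_ne fun e => ?_
    have := P.rank_eq 1 one_le_two; have := hr _ _ hzx; have := hr _ _ hxy
    rw [e, P.rank_start] at *; omega
  exact P.last_ne_z (hz _ (hmid _ h01.lt hp1y ▸ h21))

theorem le_iff_of_le [Finite L] (P : ShortestPathBelow r j x y z m p)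
    (hr : ∀ a b : L, a ⋖ b → r b = r a + 1) {k l : ℕ} (hk : k ≤ m) (hl : l ≤ m) :
    p k ≤ p l ↔ k = l ∨ k % 2 = 0 ∧ (l = k + 1 ∨ k = l + 1) := by
  refine ⟨fun h => ?_, ?_⟩
  · rcases eq_or_ne k l with e | e
    · exact Or.inl e
    have hlt := strictMono_of_covBy_succ hr (h.lt_of_ne fun h' => e (P.index_eq_of_eq hk hl h'))
    rw [P.rank_eq k hk, P.rank_eq l hl] at hlt
    rcases P.eq_or_succ_of_le k hk l hl h with e' | e' | e' <;> omega
  · rintro (rfl | ⟨he, rfl | rfl⟩)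
    · exact le_rfl
    · exact (P.covBy_succ hr (by omega) he).le
    · exact (P.succ_covBy hr (by omega) (by omega)).le

theorem le_y_iff (P : ShortestPathBelow r j x y z m p)
    (hr : ∀ a b : L, a ⋖ b → r b = r a + 1) (hzx : z ⋖ x) (hz : ∀ c, c ⋖ x → c = z)
    (hxy : x ⋖ y) (heven : m % 2 = 0) {k : ℕ} (hk : k ≤ m) : p k ≤ y ↔ k = m ∨ k = 0 := by
  refine ⟨fun h => ?_, ?_⟩
  · rcases hk.eq_or_lt with e | hk'
    · exact Or.inl e
    rcases P.eq_x_or_eq_z_of_le k hk' h with e | e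
    · exact absurd e (P.ne_x hr hzx hz heven hk)
    · exact Or.inr (P.index_eq_of_eq hk (Nat.zero_le m) (e.trans P.start.symm))
  · rintro (rfl | rfl)
    · exact P.last_le
    · exact P.start ▸ hzx.le.trans hxy.le

theorem cycle_le_iff [Finite L] (P : ShortestPathBelow r j x y z m p)
    (hr : ∀ a b : L, a ⋖ b → r b = r a + 1) (hzx : z ⋖ x) (hz : ∀ c, c ⋖ x → c = z)
    (hxy : x ⋖ y) (heven : m % 2 = 0) {k l : ℕ} (hk : k ≤ m + 1) (hl : l ≤ m + 1) :
    (if k ≤ m then p k else y) ≤ (if l ≤ m then p l else y) ↔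
      k = l ∨ k % 2 = 0 ∧ (l = k + 1 ∨ k = l + 1 ∨ k = 0 ∧ l = m + 1) := by
  rcases hk.lt_or_eq with hk | rfl <;> rcases hl.lt_or_eq with hl | rfl
  · rw [if_pos (by omega), if_pos (by omega), P.le_iff_of_le hr (by omega) (by omega)]
    omega
  · rw [if_pos (by omega), if_neg (by omega), P.le_y_iff hr hzx hz hxy heven (by omega)]
    omega
  · rw [if_neg (by omega), if_pos (by omega)]
    have hy : ¬ y ≤ p l := fun h => by
      have := (strictMono_of_covBy_succ hr).monotone h
      have := P.rank_eq l (by omega); have := hr _ _ hzx; have := hr _ _ hxy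
      have := P.rank_start; omega
    simp only [hy, false_iff]
    omega
  · simp

theorem exists_isCrown [Finite L] (P : ShortestPathBelow r j x y z m p)
    (hr : ∀ a b : L, a ⋖ b → r b = r a + 1) (hzx : z ⋖ x) (hz : ∀ c, c ⋖ x → c = z)
    (hxy : x ⋖ y) (hmid : ∀ v, z < v → v < y → v = x) :
    ∃ q : ℕ, 3 ≤ q ∧ ∃ a b : ZMod q → L, IsCrown a b := by
  have heven := P.even hr hzx hxy hmid
  have h0 : m ≠ 0 := by rintro rfl; exact P.last_ne_z P.start
  have h2 := P.ne_two hr hzx hz hxy hmid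
  have : NeZero (m / 2 + 1) := ⟨by omega⟩
  refine ⟨m / 2 + 1, by omega, _, _,
    isCrown_of_cycle (fun k => if k ≤ m then p k else y) fun k l hk hl => ?_⟩
  rw [P.cycle_le_iff hr hzx hz hxy heven (by omega) (by omega)]
  omega

end ShortestPathBelow

section Corner

variable {L : Type*} [Lattice L] {r : L → ℕ}

theorem eq_of_not_isCornerOf [Finite L] (hr : ∀ a b : L, a ⋖ b → r b = r a + 1) {x y z : L}
    (hx : DoublyIrred x) (hzx : z ⋖ x) (hxy : x ⋖ y) (h : ∀ w, ¬ IsCornerOf w x) {v : L}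
    (hzv : z < v) (hvy : v < y) : v = x := by
  have hmono := strictMono_of_covBy_succ hr
  have := hmono hzv; have := hmono hvy; have := hr _ _ hzx; have := hr _ _ hxy
  by_contra hvx
  exact h v ⟨hx, hvx, z, y, hzx, covBy_of_lt_of_rank_eq_succ hmono hzv (by omega), hxy,
    covBy_of_lt_of_rank_eq_succ hmono hvy (by omega)⟩

end Corner

/-- A finite, rank-connected, dismantlable lattice of rank at
least `2`, all of whose intermediate rank sets have at least two elements,
contains a doubly irreducible element having a corner. -/
theorem exists_doublyIrred_with_corner
    (L : Type*) [Lattice L] [Finite L] [BoundedOrder L]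
    (r : L → ℕ) (hr : IsRankFunction L r)
    (hconn : ∀ i : ℕ, i < r (⊤ : L) →
      (hasseGraph L {v : L | r v = i ∨ r v = i + 1}).Connected)
    (hd : Dismantlable L)
    (htop : 2 ≤ r (⊤ : L))
    (hbig : ∀ i : ℕ, 0 < i → i < r (⊤ : L) → 2 ≤ {v : L | r v = i}.ncard) :
    ∃ x : L, DoublyIrred x ∧ ∃ w : L, IsCornerOf w x := by
  obtain ⟨hbot, hr⟩ := hr
  have hmono := strictMono_of_covBy_succ hr
  obtain ⟨a₁, a₂, ha₁, ha₂, ha⟩ :=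
    (Set.one_lt_ncard_iff (Set.toFinite _)).1 (hbig 1 one_pos (by omega))
  obtain ⟨b₁, b₂, hb₁ : r b₁ = r ⊤ - 1, hb₂ : r b₂ = r ⊤ - 1, hb⟩ :=
    (Set.one_lt_ncard_iff (Set.toFinite _)).1 (hbig (r ⊤ - 1) (by omega) (by omega))
  obtain ⟨x, hx, hxbot, hxtop⟩ := hd.exists_doublyIrred
    (isAtom_of_rank_eq_one hmono hbot ha₁) (isAtom_of_rank_eq_one hmono hbot ha₂) ha
    (isCoatom_of_rank_succ_eq hmono (by omega)) (isCoatom_of_rank_succ_eq hmono (by omega)) hb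
  refine ⟨x, hx, by_contra fun hcorner => ?_⟩
  obtain ⟨z, hzx, hz⟩ := hx.1
  obtain ⟨y, hxy, hy⟩ := hx.2
  have hmid : ∀ v, z < v → v < y → v = x :=
    fun v => eq_of_not_isCornerOf hr hx hzx hxy (not_exists.1 hcorner)
  have hxr : 0 < r x ∧ r x < r ⊤ :=
    ⟨hbot ▸ hmono (bot_lt_iff_ne_bot.2 hxbot), hmono (lt_top_iff_ne_top.2 hxtop)⟩
  obtain ⟨x', hx', hx'x⟩ := Set.exists_ne_of_one_lt_ncard (hbig (r x) hxr.1 hxr.2) x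
  obtain ⟨w, hwy, hwx⟩ := exists_covBy_ne_of_meetIrred hr (hconn _ hxr.2) rfl hx' hx'x hxy hy
  obtain ⟨m, p, P⟩ := exists_shortestPathBelow hr (hconn (r z) (by have := hr _ _ hzx; omega))
    rfl (hr _ _ hzx) hxy hwy hwx
  obtain ⟨q, hq, a, b, hab⟩ := P.exists_isCrown hr hzx hz hxy hmid
  exact hd.not_isCrown (ZMod.two_ne_zero_of_three_le hq) hab
end

section
/- Let L be a finite, rank-connected, dismantlable lattice in which every rank set R_i with 0 < i < r(⊤) contains at least two elements, let D be the set of all doubly irreducible elements of L, and suppose that no element of D has a corner in L. Then the sublattice L − D contains no doubly irreducible elements. -/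
/-- `b` covers `a` within the subposet `S` (with the order induced from `L`). -/
def CovWithin {L : Type*} [Lattice L] (S : Set L) (a b : L) : Prop :=
  a ∈ S ∧ b ∈ S ∧ a < b ∧ ∀ c ∈ S, a < c → ¬ c < b

/-- `x` is doubly irreducible in the subposet `S`: within `S` it covers exactly
one element and is covered by exactly one element. -/
def DoublyIrredWithin {L : Type*} [Lattice L] (S : Set L) (x : L) : Prop :=
  x ∈ S ∧ (∃! z : L, CovWithin S z x) ∧ (∃! y : L, CovWithin S x y)

/-! An element `v ∉ D` has, say, two upper covers `a ≠ b` (otherwise dualize). Each upper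
cover `c` of `v` yields an upper cover of `v` in `L - D`: `c` itself if `c ∉ D`, and otherwise
the unique upper cover of `c`. The latter is not in `D`, since rank-connectivity and
`|R_i| ≥ 2` forbid a covering pair of doubly irreducible elements (it would be a whole
component of the Hasse graph on two adjacent ranks), and nothing in `L - D` lies strictly
between it and `v`, since such an element would be a corner of `c`. The covers obtained from
`a` and `b` differ, for otherwise `a` and `b` would be corners of each other or `v ⋖ a` would
fail. -/

open OrderDual

theorem SimpleGraph.Reachable.mem_of_adj_mem {V : Type*} {G : SimpleGraph V} {T : Set V}
    (hT : ∀ ⦃a b⦄, G.Adj a b → a ∈ T → b ∈ T) {a b : V} (hab : G.Reachable a b) (ha : a ∈ T) :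
    b ∈ T := by
  obtain ⟨w⟩ := hab
  induction w with
  | nil => exact ha
  | cons h _ ih => exact ih (hT h ha)

def LengthTwoGraded (L : Type*) [Preorder L] : Prop :=
  ∀ ⦃a b c u : L⦄, a ⋖ b → b ⋖ c → a < u → u < c → a ⋖ u ∧ u ⋖ c

theorem LengthTwoGraded.dual {L : Type*} [Preorder L] (h : LengthTwoGraded L) :
    LengthTwoGraded Lᵒᵈ := fun _ _ _ _ hab hbc hau huc =>
  (h (ofDual_covBy_ofDual_iff.2 hbc) (ofDual_covBy_ofDual_iff.2 hab) huc hau).symm.imp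
    ofDual_covBy_ofDual_iff.1 ofDual_covBy_ofDual_iff.1

namespace IsRankFunction

variable {L : Type*} [Lattice L] [OrderBot L] [Finite L] {r : L → ℕ}

theorem strictMono (hr : IsRankFunction L r) : StrictMono r := by
  classical
  have := Fintype.ofFinite L
  have := Fintype.toLocallyFiniteOrder (α := L)
  exact (strictMono_iff_forall_covBy r).2 fun a b h => by rw [hr.2 a b h]; exact Nat.lt_succ_self _

theorem covBy_of_lt (hr : IsRankFunction L r) {a b : L} (h : a < b) (hab : r b = r a + 1) :
    a ⋖ b :=
  ⟨h, fun c hac hcb => by have := hr.strictMono hac; have := hr.strictMono hcb; omega⟩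

theorem lengthTwoGraded (hr : IsRankFunction L r) : LengthTwoGraded L := by
  intro a b c u hab hbc hau huc
  have := hr.strictMono hau
  have := hr.strictMono huc
  have := hr.2 a b hab
  have := hr.2 b c hbc
  exact ⟨hr.covBy_of_lt hau (by omega), hr.covBy_of_lt huc (by omega)⟩

end IsRankFunction

theorem not_covBy_of_doublyIrred {L : Type*} [Lattice L] [Finite L] [BoundedOrder L]
    {r : L → ℕ} (hr : IsRankFunction L r)
    (hconn : ∀ i : ℕ, i < r (⊤ : L) →
      (hasseGraph L {v : L | r v = i ∨ r v = i + 1}).Connected)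
    (hbig : ∀ i : ℕ, 0 < i → i < r (⊤ : L) → 2 ≤ {v : L | r v = i}.ncard)
    {p q : L} (hp : DoublyIrred p) (hq : DoublyIrred q) : ¬ p ⋖ q := by
  intro hpq
  obtain ⟨z, hzp, -⟩ := hp.1
  obtain ⟨y, hqy, -⟩ := hq.2
  have hrp : r p = r z + 1 := hr.2 z p hzp
  have hrq : r q = r p + 1 := hr.2 p q hpq
  have htop : r p < r ⊤ := hr.strictMono (hpq.lt.trans (hqy.lt.trans_le le_top))
  obtain ⟨u, hu, hup⟩ := Set.exists_ne_of_one_lt_ncard (hbig (r p) (by omega) htop) p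
  have hclosed : ∀ ⦃a b : {v : L | r v = r p ∨ r v = r p + 1}⦄,
      (hasseGraph L {v : L | r v = r p ∨ r v = r p + 1}).Adj a b →
        (a : L) ∈ ({p, q} : Set L) → (b : L) ∈ ({p, q} : Set L) := by
    intro a b hab ha
    have hb : r b = r p ∨ r b = r p + 1 := b.2
    obtain ha | ha : (a : L) = p ∨ (a : L) = q := ha <;>
      rcases hab with hab | hab <;> rw [ha] at hab
    · exact .inr (hp.2.unique hab hpq)
    · have := hr.2 _ _ hab
      omega
    · have := hr.2 _ _ hab
      omega
    · exact .inl (hq.1.unique hab hpq)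
  rcases ((hconn _ htop).preconnected ⟨p, .inl rfl⟩ ⟨u, .inl hu⟩).mem_of_adj_mem hclosed
    (.inl rfl) with h | h
  · exact hup h
  · have hu : r u = r p := hu
    rw [show u = q from h] at hu
    omega

section Irreducibles

variable {L : Type*} [Lattice L]

theorem joinIrred_toDual {x : L} : JoinIrred (toDual x) ↔ MeetIrred x :=
  existsUnique_congr fun _ => ofDual_covBy_ofDual_iff

theorem meetIrred_toDual {x : L} : MeetIrred (toDual x) ↔ JoinIrred x :=
  existsUnique_congr fun _ => ofDual_covBy_ofDual_iff

theorem doublyIrred_toDual {x : L} : DoublyIrred (toDual x) ↔ DoublyIrred x := by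
  rw [DoublyIrred, DoublyIrred, joinIrred_toDual, meetIrred_toDual, and_comm]

theorem isCornerOf_toDual {w x : L} : IsCornerOf (toDual w) (toDual x) ↔ IsCornerOf w x := by
  simp only [IsCornerOf, doublyIrred_toDual, ne_eq, EmbeddingLike.apply_eq_iff_eq,
    OrderDual.exists, toDual_covBy_toDual_iff]
  constructor <;> rintro ⟨hx, hwx, z, y, h₁, h₂, h₃, h₄⟩ <;> exact ⟨hx, hwx, y, z, h₃, h₄, h₁, h₂⟩

theorem covWithin_ofDual_preimage {S : Set L} {a b : Lᵒᵈ} :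
    CovWithin (ofDual ⁻¹' S) a b ↔ CovWithin S (ofDual b) (ofDual a) := by
  simp only [CovWithin, Set.mem_preimage, OrderDual.forall, ofDual_toDual, ofDual_lt_ofDual]
  constructor <;> rintro ⟨ha, hb, hab, h⟩ <;> exact ⟨hb, ha, hab, fun c hc h₁ h₂ => h c hc h₂ h₁⟩

end Irreducibles

section CoversOutsideIrreducibles

variable {L : Type*} [Lattice L]

theorem exists_covWithin_of_covBy (hgr : LengthTwoGraded L)
    (hstack : ∀ p q : L, DoublyIrred p → DoublyIrred q → ¬ p ⋖ q)
    (hnc : ∀ x : L, DoublyIrred x → ∀ w : L, ¬ IsCornerOf w x)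
    {v c : L} (hv : ¬ DoublyIrred v) (hvc : v ⋖ c) :
    ∃ g, CovWithin {u | ¬ DoublyIrred u} v g ∧ (g = c ∨ DoublyIrred c ∧ c ⋖ g) := by
  by_cases hc : DoublyIrred c
  · obtain ⟨y, hcy, -⟩ := hc.2
    refine ⟨y, ⟨hv, fun hy => hstack c y hc hy hcy, hvc.lt.trans hcy.lt, fun u hu hvu huy => ?_⟩,
      .inr ⟨hc, hcy⟩⟩
    obtain ⟨hvu', huy'⟩ := hgr hvc hcy hvu huy
    exact hnc c hc u ⟨hc, fun huc => hu (huc ▸ hc), v, y, hvc, hvu', hcy, huy'⟩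
  · exact ⟨c, ⟨hv, hc, hvc.lt, fun _ _ h => hvc.2 h⟩, .inl rfl⟩

variable [Finite L]

theorem not_existsUnique_covWithin_of_not_meetIrred (hgr : LengthTwoGraded L)
    (hstack : ∀ p q : L, DoublyIrred p → DoublyIrred q → ¬ p ⋖ q)
    (hnc : ∀ x : L, DoublyIrred x → ∀ w : L, ¬ IsCornerOf w x)
    {v : L} (hv : ¬ DoublyIrred v) (hM : ¬ MeetIrred v) :
    ¬ ∃! g, CovWithin {u | ¬ DoublyIrred u} v g := by
  rintro ⟨g, hg, hunique⟩
  obtain ⟨a, hva, -⟩ := exists_covBy_le_of_lt hg.2.2.1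
  obtain ⟨b, hvb, hba⟩ : ∃ b, v ⋖ b ∧ b ≠ a := by
    by_contra! h
    exact hM ⟨a, hva, h⟩
  obtain ⟨ga, hga, rfl | ⟨ha, hag⟩⟩ := exists_covWithin_of_covBy hgr hstack hnc hv hva <;>
    obtain ⟨gb, hgb, rfl | ⟨hb, hbg⟩⟩ := exists_covWithin_of_covBy hgr hstack hnc hv hvb <;>
    obtain rfl := (hunique _ hgb).trans (hunique _ hga).symm
  · exact hba rfl
  · exact hva.2 hvb.lt hbg.lt
  · exact hvb.2 hva.lt hag.lt
  · exact hnc a ha b ⟨ha, hba, v, gb, hva, hvb, hag, hbg⟩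

theorem not_existsUnique_covWithin_of_not_joinIrred (hgr : LengthTwoGraded L)
    (hstack : ∀ p q : L, DoublyIrred p → DoublyIrred q → ¬ p ⋖ q)
    (hnc : ∀ x : L, DoublyIrred x → ∀ w : L, ¬ IsCornerOf w x)
    {v : L} (hv : ¬ DoublyIrred v) (hJ : ¬ JoinIrred v) :
    ¬ ∃! z, CovWithin {u | ¬ DoublyIrred u} z v := by
  have hS : {u : Lᵒᵈ | ¬ DoublyIrred u} = ofDual ⁻¹' {u : L | ¬ DoublyIrred u} := by
    ext u
    exact (doublyIrred_toDual (x := ofDual u)).not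
  have h := not_existsUnique_covWithin_of_not_meetIrred hgr.dual
    (fun p q hp hq hpq => hstack (ofDual q) (ofDual p) (doublyIrred_toDual.1 hq)
      (doublyIrred_toDual.1 hp) (ofDual_covBy_ofDual_iff.2 hpq))
    (fun x hx w hw => hnc (ofDual x) (doublyIrred_toDual.1 hx) (ofDual w) (isCornerOf_toDual.1 hw))
    (v := toDual v) (doublyIrred_toDual.not.2 hv) (meetIrred_toDual.not.2 hJ)
  simp only [hS, covWithin_ofDual_preimage] at h
  exact h

end CoversOutsideIrreducibles

theorem removing_doublyIrred_leaves_no_doublyIrred_general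
    (L : Type*) [Lattice L] [Finite L] [BoundedOrder L]
    (r : L → ℕ) (hr : IsRankFunction L r)
    (hconn : ∀ i : ℕ, i < r (⊤ : L) →
      (hasseGraph L {v : L | r v = i ∨ r v = i + 1}).Connected)
    (hbig : ∀ i : ℕ, 0 < i → i < r (⊤ : L) → 2 ≤ {v : L | r v = i}.ncard)
    (hnc : ∀ x : L, DoublyIrred x → ∀ w : L, ¬ IsCornerOf w x) :
    ∀ v : L, ¬ DoublyIrred v → ¬ DoublyIrredWithin {u : L | ¬ DoublyIrred u} v := by
  have hstack : ∀ p q : L, DoublyIrred p → DoublyIrred q → ¬ p ⋖ q :=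
    fun _ _ => not_covBy_of_doublyIrred hr hconn hbig
  rintro v hv ⟨-, hlow, hup⟩
  rcases not_and_or.1 hv with hJ | hM
  · exact not_existsUnique_covWithin_of_not_joinIrred hr.lengthTwoGraded hstack hnc hv hJ hlow
  · exact not_existsUnique_covWithin_of_not_meetIrred hr.lengthTwoGraded hstack hnc hv hM hup

/-- Let `L` be a finite, rank-connected, dismantlable lattice
all of whose intermediate rank sets have at least two elements, and let `D` be
the set of doubly irreducible elements of `L`.  If no element of `D` has a
corner, then the sublattice `L - D` has no doubly irreducible elements. -/
theorem removing_doublyIrred_leaves_no_doublyIrred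
    (L : Type*) [Lattice L] [Finite L] [BoundedOrder L]
    (r : L → ℕ) (hr : IsRankFunction L r)
    (hconn : ∀ i : ℕ, i < r (⊤ : L) →
      (hasseGraph L {v : L | r v = i ∨ r v = i + 1}).Connected)
    (hd : Dismantlable L)
    (hbig : ∀ i : ℕ, 0 < i → i < r (⊤ : L) → 2 ≤ {v : L | r v = i}.ncard)
    (hnc : ∀ x : L, DoublyIrred x → ∀ w : L, ¬ IsCornerOf w x) :
    ∀ v : L, ¬ DoublyIrred v → ¬ DoublyIrredWithin {u : L | ¬ DoublyIrred u} v :=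
  removing_doublyIrred_leaves_no_doublyIrred_general L r hr hconn hbig hnc
end
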